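/- Let n be a positive integer that is not divisible by 3, and let c : ZMod n → ℝ satisfy c i ≠ 0 for all i. Then there exists a unique function t : ZMod n → ℝ such that t i * t (i+1) * t (i+2) = c i for every i ∈ ZMod n. (This is the key step of Proposition 4.1: when n is not a multiple of 3, every twisted n-gon admits a unique lift to ℝ³ with unit Wronskian, identifying the space of twisted n-gons with the space of difference equations V_{i+3} = a_i V_{i+2} + b_i V_{i+1} + V_i.) -/

import Mathlib

/-!
Write `T t i = t i * t (i+1) * t (i+2)` for `t : ZMod n → G`, `G` a commutative group. When
`3 ∤ n` there are integer weights `a` with `a j + a (j+1) + a (j+2) = 3 δ_{j,-1}`: the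
`3`-periodic pattern `1, 1, -2` (if `n ≡ 1 mod 3`) or `-1, 2, -1` (if `n ≡ 2 mod 3`), read off
`j.val`, sums to `0` over every window except the one starting at `-1`, which sums to `3`.
Convolution `A` with these weights commutes with `T`, and `T ∘ A = A ∘ T` is pointwise cubing.
So `T` is bijective as soon as cubing is bijective on `G`, as it is on `ℝˣ`; a real solution
never vanishes, so it is a solution in `ℝˣ`.
-/

open Finset Function

namespace ZMod

variable {n : ℕ} [NeZero n]

lemma val_add_one (i : ZMod n) : (i + 1).val = if i.val + 1 = n then 0 else i.val + 1 := by
  rw [show (i + 1).val = (i.val + 1) % n by simpa using val_natCast n (i.val + 1)]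
  split_ifs with h
  · rw [h, Nat.mod_self]
  · have := val_lt i
    exact Nat.mod_eq_of_lt (by omega)

lemma eq_neg_one_iff_val_add_one_eq (i : ZMod n) : i = -1 ↔ i.val + 1 = n := by
  rw [eq_neg_iff_add_eq_zero, ← val_eq_zero, val_add_one]
  split_ifs with h <;> simp [h]

end ZMod

def cubingWeight (n : ℕ) (j : ZMod n) : ℤ :=
  if n % 3 = 1 then (if j.val % 3 = 2 then -2 else 1) else (if j.val % 3 = 1 then 2 else -1)

lemma cubingWeight_add_add {n : ℕ} [NeZero n] (h3 : ¬ 3 ∣ n) (j : ZMod n) :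
    cubingWeight n j + cubingWeight n (j + 1) + cubingWeight n (j + 2) =
      if j = -1 then 3 else 0 := by
  have hj := j.val_lt
  rw [← one_add_one_eq_two, ← add_assoc]
  simp only [cubingWeight, ZMod.eq_neg_one_iff_val_add_one_eq, ZMod.val_add_one]
  split_ifs <;> first | contradiction | omega

section TripleProduct

variable {G : Type*} [CommGroup G] {n : ℕ}

def tripleProd (t : ZMod n → G) (i : ZMod n) : G :=
  t i * t (i + 1) * t (i + 2)

def weightedProd [NeZero n] (a : ZMod n → ℤ) (f : ZMod n → G) (k : ZMod n) : G :=
  ∏ j, f (k - 1 - j) ^ a j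

variable [NeZero n] (a : ZMod n → ℤ) (f : ZMod n → G)

lemma weightedProd_add (k m : ZMod n) :
    weightedProd a f (k + m) = ∏ j, f (k - 1 - j) ^ a (j + m) := by
  rw [weightedProd, ← Equiv.prod_comp (Equiv.addRight m)]
  simp only [Equiv.coe_addRight]
  congr! 3
  abel

lemma weightedProd_tripleProd :
    weightedProd a (tripleProd f) = tripleProd (weightedProd a f) := by
  ext k
  have h1 (j : ZMod n) : k - 1 - j + 1 = k + 1 - 1 - j := by abel
  have h2 (j : ZMod n) : k - 1 - j + 2 = k + 2 - 1 - j := by abel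
  simp only [weightedProd, tripleProd, mul_zpow, prod_mul_distrib, h1, h2]

lemma tripleProd_weightedProd
    (ha : ∀ j, a j + a (j + 1) + a (j + 2) = if j = -1 then 3 else 0) :
    tripleProd (weightedProd a f) = f ^ 3 := by
  ext k
  have hk : weightedProd a f k = ∏ j, f (k - 1 - j) ^ a (j + 0) := by
    simpa using weightedProd_add a f k 0
  rw [tripleProd, hk, weightedProd_add, weightedProd_add, ← prod_mul_distrib, ← prod_mul_distrib]
  simp only [add_zero, ← zpow_add, ha]
  rw [Fintype.prod_eq_single (-1) fun j hj => by simp [hj]]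
  simp

theorem tripleProd_bijective_of_weight
    (ha : ∀ j, a j + a (j + 1) + a (j + 2) = if j = -1 then 3 else 0)
    (hcube : Bijective fun x : G => x ^ 3) :
    Bijective (tripleProd : (ZMod n → G) → ZMod n → G) := by
  have hcube' : Bijective fun f : ZMod n → G => f ^ 3 := Bijective.piMap fun _ => hcube
  refine ⟨.of_comp (f := weightedProd a) ?_, .of_comp (g := weightedProd a) ?_⟩
  · convert hcube'.1 using 1
    funext f
    rw [comp_apply, weightedProd_tripleProd, tripleProd_weightedProd a f ha]
  · convert hcube'.2 using 1
    exact funext (tripleProd_weightedProd a · ha)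

end TripleProduct

theorem tripleProd_bijective {G : Type*} [CommGroup G] {n : ℕ} (h3 : ¬ 3 ∣ n)
    (hcube : Bijective fun x : G => x ^ 3) :
    Bijective (tripleProd : (ZMod n → G) → ZMod n → G) :=
  haveI : NeZero n := ⟨by rintro rfl; exact h3 (dvd_zero 3)⟩
  tripleProd_bijective_of_weight (cubingWeight n) (cubingWeight_add_add h3) hcube

lemma Units.bijective_pow {G₀ : Type*} [GroupWithZero G₀] {k : ℕ} (hk : k ≠ 0)
    (h : Bijective fun x : G₀ => x ^ k) : Bijective fun u : G₀ˣ => u ^ k := by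
  refine ⟨fun u v huv => Units.ext (h.1 ?_), fun u => ?_⟩
  · simpa using congrArg Units.val huv
  · obtain ⟨x, hx⟩ := h.2 u
    have hx0 : x ≠ 0 := fun h0 => u.ne_zero (by simp [← hx, h0, hk])
    exact ⟨Units.mk0 x hx0, Units.ext (by simpa using hx)⟩

lemma Real.bijective_pow_of_odd {k : ℕ} (hk : Odd k) : Bijective fun x : ℝ => x ^ k := by
  refine ⟨hk.pow_injective, fun y => ?_⟩
  have hk0 : k ≠ 0 := by rintro rfl; simp at hk
  rcases le_or_gt 0 y with hy | hy
  · exact ⟨y ^ (k⁻¹ : ℝ), Real.rpow_inv_natCast_pow hy hk0⟩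
  · refine ⟨-(-y) ^ (k⁻¹ : ℝ), ?_⟩
    simp only [hk.neg_pow, Real.rpow_inv_natCast_pow (neg_nonneg.2 hy.le) hk0, neg_neg]

theorem existsUnique_mul_mul_eq {G₀ : Type*} [CommGroupWithZero G₀]
    (hcube : Bijective fun x : G₀ => x ^ 3) {n : ℕ} (h3 : ¬ 3 ∣ n) (c : ZMod n → G₀)
    (hc : ∀ i, c i ≠ 0) :
    ∃! t : ZMod n → G₀, ∀ i, t i * t (i + 1) * t (i + 2) = c i := by
  have hT := tripleProd_bijective (G := G₀ˣ) h3 (Units.bijective_pow three_ne_zero hcube)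
  obtain ⟨u, hu⟩ := hT.2 fun i => Units.mk0 (c i) (hc i)
  refine ⟨fun i => u i, fun i => by simpa [tripleProd] using congrArg (fun v => (v i : G₀)) hu,
    fun t ht => ?_⟩
  have ht0 (i) : t i ≠ 0 := fun h0 => hc i (by simp [← ht i, h0])
  have htu : (fun i => Units.mk0 (t i) (ht0 i)) = u :=
    hT.1 (hu.symm ▸ funext fun i => Units.ext (by simp [tripleProd, ht]))
  simp [← htu]

theorem stmt_0 (n : ℕ) (h3 : ¬ (3 ∣ n)) (c : ZMod n → ℝ)
    (hc : ∀ i, c i ≠ 0) :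
    ∃! t : ZMod n → ℝ, ∀ i, t i * t (i + 1) * t (i + 2) = c i :=
  existsUnique_mul_mul_eq (Real.bijective_pow_of_odd (by decide)) h3 c hc
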